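/- arXiv:1812.03033 — 4 statements merged into one kernel-verified Lean document; each statement's English description precedes it below -/
import Mathlib

section
/- Let A be a finite group, B a normal subgroup with A/B abelian, π an irreducible complex representation of A, and σ an irreducible complex representation of B. If σ occurs as a subrepresentation of the restriction of π to B, then every irreducible constituent of the restriction of π to B is A-conjugate to σ, i.e. isomorphic to σ^g for some g ∈ A, where σ^g(x) = σ(g x g⁻¹). -/
set_option maxHeartbeats 1000000
set_option synthInstance.maxHeartbeats 1000000

section ReprDefs

variable {A : Type} [Group A] {V W : Type}
  [AddCommGroup V] [Module ℂ V] [AddCommGroup W] [Module ℂ W]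

/-- The twist of a representation by a `ℂˣ`-valued character of the group. -/
def twist (π : Representation ℂ A V) (χ : A →* ℂˣ) : Representation ℂ A V where
  toFun g := (χ g : ℂ) • π g
  map_one' := by simp
  map_mul' g h := by
    simp only [map_mul, Units.val_mul, mul_smul, smul_mul_assoc, mul_smul_comm]
    rw [smul_comm]

/-- Isomorphism of representations. -/
def RepIso (π : Representation ℂ A V) (ρ : Representation ℂ A W) : Prop :=
  ∃ e : V ≃ₗ[ℂ] W, ∀ g v, e (π g v) = ρ g (e v)

/-- The space of equivariant linear maps between two representations. -/
def homSpace (π : Representation ℂ A V) (ρ : Representation ℂ A W) :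
    Submodule ℂ (V →ₗ[ℂ] W) where
  carrier := {T | ∀ g v, T (π g v) = ρ g (T v)}
  add_mem' := by intro T S hT hS g v; simp [hT g v, hS g v]
  zero_mem' := by intro g v; simp
  smul_mem' := by intro c T hT g v; simp [hT g v]

/-- Irreducibility: the space is nonzero and the only invariant subspaces are `⊥` and `⊤`. -/
def IsIrred (π : Representation ℂ A V) : Prop :=
  (⊤ : Submodule ℂ V) ≠ ⊥ ∧
    ∀ p : Submodule ℂ V, (∀ g v, v ∈ p → π g v ∈ p) → p = ⊥ ∨ p = ⊤

variable {C : Type} [Group C]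

/-- `σ` occurs as a subrepresentation (irreducible constituent) of `ρ`. -/
def Occurs (σ : Representation ℂ C W) (ρ : Representation ℂ C V) : Prop :=
  ∃ T : W →ₗ[ℂ] V, (∀ c w, T (σ c w) = ρ c (T w)) ∧ Function.Injective T

/-- The space of the representation induced along a group homomorphism `f : C →* A`:
functions `F : A → W` with `F (f h * g) = σ h (F g)`. -/
def indSpace (f : C →* A) (σ : Representation ℂ C W) : Submodule ℂ (A → W) where
  carrier := {F | ∀ (h : C) (g : A), F (f h * g) = σ h (F g)}
  add_mem' := by intro F G hF hG h g; simp [hF h g, hG h g]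
  zero_mem' := by intro h g; simp
  smul_mem' := by intro c F hF h g; simp [hF h g]

/-- The induced representation, with `A` acting by right translation. -/
def ind (f : C →* A) (σ : Representation ℂ C W) :
    Representation ℂ A (indSpace f σ) where
  toFun a :=
    { toFun := fun F => ⟨fun g => F.1 (g * a), fun h g => by
        simpa [mul_assoc] using F.2 h (g * a)⟩
      map_add' := fun F G => rfl
      map_smul' := fun c F => rfl }
  map_one' := by
    apply LinearMap.ext; intro F; apply Subtype.ext; funext g; simp
  map_mul' a b := by
    apply LinearMap.ext; intro F; apply Subtype.ext; funext g
    simp [mul_assoc]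

/-- Restriction of a representation of `A` to a subgroup `B`. -/
def Res (B : Subgroup A) (π : Representation ℂ A V) : Representation ℂ B V :=
  π.comp B.subtype

/-- Conjugation `x ↦ g x g⁻¹` as an endomorphism of a normal subgroup `B`. -/
def conjHom (B : Subgroup A) [hB : B.Normal] (g : A) : B →* B where
  toFun x := ⟨g * x * g⁻¹, hB.conj_mem x x.2 g⟩
  map_one' := by ext; simp
  map_mul' x y := by ext; simp [mul_assoc]

/-- The conjugate representation `σ^g : x ↦ σ (g x g⁻¹)` of a normal subgroup. -/
def conjRep (B : Subgroup A) [B.Normal] (σ : Representation ℂ B W) (g : A) :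
    Representation ℂ B W :=
  σ.comp (conjHom B g)

/-- The twist of `π` by a character of the quotient `A ⧸ B`. -/
def charTwist (B : Subgroup A) [B.Normal] (π : Representation ℂ A V)
    (χ : (A ⧸ B) →* ℂˣ) : Representation ℂ A V :=
  twist π (χ.comp (QuotientGroup.mk' B))

/-- The group `X(π)` of characters `χ` of `A ⧸ B` with `π ⊗ χ ≃ π`, as a set. -/
def Xgrp (B : Subgroup A) [B.Normal] (π : Representation ℂ A V) :
    Set ((A ⧸ B) →* ℂˣ) :=
  {χ | RepIso (charTwist B π χ) π}

/-- `B(π)`: the common kernel in `A` of all characters in `X(π)`. -/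
def Bpi (B : Subgroup A) [B.Normal] (π : Representation ℂ A V) : Subgroup A :=
  ⨅ χ ∈ Xgrp B π, MonoidHom.ker ((χ : (A ⧸ B) →* ℂˣ).comp (QuotientGroup.mk' B))

lemma le_Bpi (B : Subgroup A) [B.Normal] (π : Representation ℂ A V) :
    B ≤ Bpi B π := by
  intro b hb
  simp only [Bpi, Subgroup.mem_iInf]
  intro χ _
  simp [MonoidHom.mem_ker, (QuotientGroup.eq_one_iff b).2 hb]


instance indAddCommGroup {C : Type} [Group C] (f : C →* A) (σ : Representation ℂ C W) :
    AddCommGroup ↥(indSpace f σ) :=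
  Submodule.addCommGroup _

instance indModule {C : Type} [Group C] (f : C →* A) (σ : Representation ℂ C W) :
    Module ℂ ↥(indSpace f σ) :=
  Submodule.module _

instance indHomAddCommGroup {C : Type} [Group C] (f : C →* A) (σ : Representation ℂ C W) :
    AddCommGroup (V →ₗ[ℂ] ↥(indSpace f σ)) :=
  LinearMap.addCommGroup

instance indHomModule {C : Type} [Group C] (f : C →* A) (σ : Representation ℂ C W) :
    Module ℂ (V →ₗ[ℂ] ↥(indSpace f σ)) :=
  LinearMap.module

end ReprDefs

section Aux

variable {A : Type} [Group A] {V W : Type}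
  [AddCommGroup V] [Module ℂ V] [AddCommGroup W] [Module ℂ W]

lemma repIso_of_ne_zero (π : Representation ℂ A V) (ρ : Representation ℂ A W)
    (hπ : IsIrred π) (hρ : IsIrred ρ)
    (f : V →ₗ[ℂ] W) (hf : ∀ g v, f (π g v) = ρ g (f v)) (hne : f ≠ 0) :
    RepIso π ρ := by
  have hker : LinearMap.ker f = ⊥ := by
    rcases hπ.2 (LinearMap.ker f) (fun g v hv => by
      simp only [LinearMap.mem_ker] at hv ⊢
      rw [hf, hv, map_zero]) with h | h
    · exact h
    · exfalso; apply hne; ext v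
      have hv : v ∈ LinearMap.ker f := h ▸ Submodule.mem_top
      simpa using hv
  have hrange : LinearMap.range f = ⊤ := by
    rcases hρ.2 (LinearMap.range f) (fun g w hw => by
      obtain ⟨v, rfl⟩ := hw
      exact ⟨π g v, hf g v⟩) with h | h
    · exfalso; apply hne; ext v
      have hv : f v ∈ LinearMap.range f := ⟨v, rfl⟩
      rw [h] at hv; simpa using hv
    · exact h
  exact ⟨LinearEquiv.ofBijective f
    ⟨LinearMap.ker_eq_bot.mp hker, LinearMap.range_eq_top.mp hrange⟩,
    fun g v => hf g v⟩

lemma repIso_symm (π : Representation ℂ A V) (ρ : Representation ℂ A W)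
    (h : RepIso π ρ) : RepIso ρ π := by
  obtain ⟨e, he⟩ := h
  refine ⟨e.symm, fun g w => ?_⟩
  apply e.injective
  rw [he, e.apply_symm_apply, e.apply_symm_apply]

lemma isIrred_conjRep (B : Subgroup A) [hB : B.Normal]
    (σ : Representation ℂ B W) (hσ : IsIrred σ) (g : A) :
    IsIrred (conjRep B σ g) := by
  refine ⟨hσ.1, fun p hp => ?_⟩
  apply hσ.2
  intro b v hv
  have hmem : g⁻¹ * ↑b * g ∈ B := by
    have := hB.conj_mem ↑b b.2 g⁻¹
    simpa using this
  have h := hp ⟨g⁻¹ * ↑b * g, hmem⟩ v hv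
  have hconj : conjHom B g ⟨g⁻¹ * ↑b * g, hmem⟩ = b := by
    apply Subtype.ext
    show g * (g⁻¹ * ↑b * g) * g⁻¹ = ↑b
    group
  simpa only [conjRep, MonoidHom.comp_apply, hconj] using h

end Aux


theorem constituents_are_conjugate {A : Type} [Group A] [Fintype A] {V W : Type}
    [AddCommGroup V] [Module ℂ V] [FiniteDimensional ℂ V]
    [AddCommGroup W] [Module ℂ W] [FiniteDimensional ℂ W]
    (B : Subgroup A) [B.Normal] (hab : ∀ x y : A ⧸ B, x * y = y * x)
    (π : Representation ℂ A V) (hπ : IsIrred π)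
    (σ : Representation ℂ B W) (hσ : IsIrred σ) (hocc : Occurs σ (Res B π))
    {W' : Type} [AddCommGroup W'] [Module ℂ W'] [FiniteDimensional ℂ W']
    (τ : Representation ℂ B W') (hτ : IsIrred τ) (hτocc : Occurs τ (Res B π)) :
    ∃ g : A, RepIso τ (conjRep B σ g) := by
  classical
  haveI : Fintype B := Fintype.ofFinite B
  obtain ⟨T, hT, hTinj⟩ := hocc
  obtain ⟨S, hS, hSinj⟩ := hτocc
  -- π restricted to B acts as π ↑b
  have hResπ : ∀ (b : B) (v : V), Res B π b v = π (↑b) v := fun b v => rfl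
  -- a linear retraction of S
  obtain ⟨r, hr⟩ := S.exists_leftInverse_of_injective (LinearMap.ker_eq_bot.mpr hSinj)
  have hrS : ∀ w', r (S w') = w' := fun w' => congrFun (congrArg DFunLike.coe hr) w'
  set c : ℂ := (Fintype.card B : ℂ)⁻¹ with hc
  have hcard : (Fintype.card B : ℂ) ≠ 0 := Nat.cast_ne_zero.mpr Fintype.card_ne_zero
  -- averaged equivariant projection
  set R : V →ₗ[ℂ] W' := c • ∑ b : B, (τ b) ∘ₗ r ∘ₗ (π (↑b)⁻¹) with hR
  have hRapp : ∀ v, R v = c • ∑ b : B, τ b (r (π (↑b)⁻¹ v)) := by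
    intro v
    simp [hR, LinearMap.sum_apply]
  have hRS : ∀ w', R (S w') = w' := by
    intro w'
    rw [hRapp]
    have hterm : ∀ b : B, τ b (r (π (↑b)⁻¹ (S w'))) = w' := by
      intro b
      have h1 : π (↑b)⁻¹ (S w') = S (τ b⁻¹ w') := by
        rw [hS b⁻¹ w', hResπ]
        norm_cast
      rw [h1, hrS, ← Module.End.mul_apply, ← map_mul]
      simp
    rw [Finset.sum_congr rfl (fun b _ => hterm b), Finset.sum_const, Finset.card_univ,
      ← Nat.cast_smul_eq_nsmul ℂ, smul_smul, hc, inv_mul_cancel₀ hcard, one_smul]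
  have hReq : ∀ (b : B) (v : V), R (π (↑b) v) = τ b (R v) := by
    intro b₀ v
    rw [hRapp, hRapp, map_smul]
    congr 1
    rw [map_sum]
    refine Fintype.sum_equiv (Equiv.mulLeft b₀⁻¹) _ _ ?_
    intro d
    simp only [Equiv.coe_mulLeft]
    have e1 : b₀ * (b₀⁻¹ * d) = d := by group
    have e2 : ((↑(b₀⁻¹ * d) : A))⁻¹ = (↑d)⁻¹ * ↑b₀ := by push_cast; group
    rw [← Module.End.mul_apply (τ b₀) (τ (b₀⁻¹ * d)), ← map_mul, e1, e2,
      ← Module.End.mul_apply (π (↑d)⁻¹) (π ↑b₀), ← map_mul]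
  -- the A-span of the image of T is all of V
  set U : Submodule ℂ V := ⨆ g : A, LinearMap.range ((π g) ∘ₗ T) with hU
  have hUinv : ∀ (g : A) (v : V), v ∈ U → π g v ∈ U := by
    intro a v hv
    have hmap : Submodule.map (π a) U ≤ U := by
      rw [hU, Submodule.map_iSup]
      apply iSup_le
      intro g
      rw [← LinearMap.range_comp]
      have hcomp : (π a) ∘ₗ ((π g) ∘ₗ T) = (π (a * g)) ∘ₗ T := by
        ext w
        simp [Module.End.mul_apply, map_mul]
      rw [hcomp]
      exact le_iSup (fun g => LinearMap.range ((π g) ∘ₗ T)) (a * g)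
    exact hmap ⟨v, hv, rfl⟩
  have hUne : U ≠ ⊥ := by
    -- W is nonzero
    have hW : ∃ w : W, w ≠ 0 := by
      by_contra h
      push_neg at h
      exact hσ.1 (by ext w; simp [h w])
    obtain ⟨w, hw⟩ := hW
    intro hbot
    have hTw : T w ∈ U := by
      have : T w ∈ LinearMap.range ((π 1) ∘ₗ T) := ⟨w, by simp⟩
      exact le_iSup (fun g => LinearMap.range ((π g) ∘ₗ T)) 1 this
    rw [hbot] at hTw
    simp only [Submodule.mem_bot] at hTw
    exact hw (hTinj (by simpa using hTw))
  have hUtop : U = ⊤ := (hπ.2 U hUinv).resolve_left hUne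
  -- find g with R ∘ π g ∘ T ≠ 0
  have hex : ∃ g : A, R ∘ₗ ((π g) ∘ₗ T) ≠ 0 := by
    by_contra h
    push_neg at h
    have hUker : U ≤ LinearMap.ker R := by
      rw [hU]
      apply iSup_le
      rintro g x ⟨w, rfl⟩
      have := congrFun (congrArg DFunLike.coe (h g)) w
      simpa [LinearMap.mem_ker] using this
    have hW' : ∃ w' : W', w' ≠ 0 := by
      by_contra h'
      push_neg at h'
      exact hτ.1 (by ext w'; simp [h' w'])
    obtain ⟨w', hw'⟩ := hW'
    have : R (S w') = 0 := hUker (hUtop ▸ Submodule.mem_top)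
    rw [hRS] at this
    exact hw' this
  obtain ⟨g, hg⟩ := hex
  refine ⟨g⁻¹, repIso_symm _ _ ?_⟩
  apply repIso_of_ne_zero (conjRep B σ g⁻¹) τ (isIrred_conjRep B σ hσ g⁻¹) hτ
    (R ∘ₗ ((π g) ∘ₗ T)) _ hg
  intro b w
  simp only [LinearMap.comp_apply]
  have hmem : (conjHom B g⁻¹ b : A) = g⁻¹ * ↑b * g⁻¹⁻¹ := rfl
  rw [conjRep, MonoidHom.comp_apply, hT, hResπ, ← Module.End.mul_apply (π g),
    ← map_mul, hmem]
  have hgrp : g * (g⁻¹ * ↑b * g⁻¹⁻¹) = ↑b * g := by group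
  rw [hgrp, map_mul, Module.End.mul_apply, hReq]
end

section
/- Let A be a finite group, B a normal subgroup with A/B abelian, and π, π' irreducible complex representations of A. If the restrictions of π and π' to B share a common irreducible constituent, then there exists a character χ : A/B → ℂˣ such that π' is isomorphic to π twisted by χ (composed with the quotient map A → A/B). -/
set_option maxHeartbeats 1000000
set_option synthInstance.maxHeartbeats 1000000

section AuxConj

variable {A : Type} [Group A] {V V' : Type}
  [AddCommGroup V] [Module ℂ V] [AddCommGroup V'] [Module ℂ V']

/-- Conjugation action of `A` on linear maps `V →ₗ V'`. -/
def conjL (π : Representation ℂ A V) (π' : Representation ℂ A V') (g : A) :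
    (V →ₗ[ℂ] V') →ₗ[ℂ] (V →ₗ[ℂ] V') where
  toFun T := π' g ∘ₗ T ∘ₗ π g⁻¹
  map_add' T S := by ext v; simp
  map_smul' c T := by ext v; simp

lemma conjL_apply (π : Representation ℂ A V) (π' : Representation ℂ A V') (g : A)
    (T : V →ₗ[ℂ] V') (v : V) : conjL π π' g T v = π' g (T (π g⁻¹ v)) := rfl

lemma conjL_conjL (π : Representation ℂ A V) (π' : Representation ℂ A V') (g h : A)
    (T : V →ₗ[ℂ] V') : conjL π π' g (conjL π π' h T) = conjL π π' (g * h) T := by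
  ext v
  simp only [conjL_apply, map_mul, mul_inv_rev, Module.End.mul_apply]

lemma conjL_one (π : Representation ℂ A V) (π' : Representation ℂ A V')
    (T : V →ₗ[ℂ] V') : conjL π π' 1 T = T := by
  ext v
  simp [conjL_apply]

end AuxConj


theorem twist_of_common_constituent {A : Type} [Group A] [Fintype A] {V W : Type}
    [AddCommGroup V] [Module ℂ V] [FiniteDimensional ℂ V]
    [AddCommGroup W] [Module ℂ W] [FiniteDimensional ℂ W]
    (B : Subgroup A) [B.Normal] (hab : ∀ x y : A ⧸ B, x * y = y * x)
    (π : Representation ℂ A V) (hπ : IsIrred π)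
    {V' : Type} [AddCommGroup V'] [Module ℂ V'] [FiniteDimensional ℂ V']
    (π' : Representation ℂ A V') (hπ' : IsIrred π')
    (σ : Representation ℂ B W) (hσ : IsIrred σ)
    (h1 : Occurs σ (Res B π)) (h2 : Occurs σ (Res B π')) :
    ∃ χ : (A ⧸ B) →* ℂˣ, RepIso π' (charTwist B π χ) := by
  classical
  obtain ⟨T₁, hT₁, hT₁inj⟩ := h1
  obtain ⟨T₂, hT₂, hT₂inj⟩ := h2
  -- W is nontrivial
  obtain ⟨w₀, hw₀⟩ : ∃ w : W, w ≠ 0 := by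
    by_contra h
    push_neg at h
    exact hσ.1 ((Submodule.eq_bot_iff ⊤).mpr (fun x _ => h x))
  haveI : Fintype B := Fintype.ofFinite B
  set H : Submodule ℂ (V →ₗ[ℂ] V') := homSpace (Res B π) (Res B π') with hHdef
  have memH : ∀ T : V →ₗ[ℂ] V',
      T ∈ H ↔ ∀ (b : B) (v : V), T (π b v) = π' b (T v) := fun T => Iff.rfl
  -- elements of `H` are fixed by conjugation by elements of `B`
  have hfix : ∀ T ∈ H, ∀ b ∈ B, conjL π π' b T = T := by
    intro T hT b hb
    ext v
    have h2 := (memH T).mp hT ⟨b⁻¹, inv_mem hb⟩ v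
    rw [conjL_apply, h2]
    show π' b (π' b⁻¹ (T v)) = T v
    rw [← Module.End.mul_apply, ← map_mul, mul_inv_cancel, map_one, Module.End.one_apply]
  -- membership in `H` in terms of conjugation
  have memH' : ∀ T : V →ₗ[ℂ] V', T ∈ H ↔ ∀ b ∈ B, conjL π π' b T = T := by
    intro T
    constructor
    · exact hfix T
    · intro h
      rw [memH]
      intro b v
      have h1 := LinearMap.congr_fun (h b b.2) (π b v)
      rw [conjL_apply] at h1
      have h2 : π (↑b)⁻¹ (π (↑b) v) = v := by
        rw [← Module.End.mul_apply, ← map_mul, inv_mul_cancel, map_one, Module.End.one_apply]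
      rw [h2] at h1
      exact h1.symm
  -- `H` is invariant under conjugation by all of `A`
  have hHinv : ∀ (g : A), ∀ T ∈ H, conjL π π' g T ∈ H := by
    intro g T hT
    rw [memH']
    intro b hb
    have hb' : g⁻¹ * b * g ∈ B := by
      have := Subgroup.Normal.conj_mem ‹B.Normal› b hb g⁻¹
      simpa using this
    rw [conjL_conjL]
    have h3 : b * g = g * (g⁻¹ * b * g) := by group
    rw [h3, ← conjL_conjL, hfix T hT _ hb']
  -- conjugation operators commute on `H`
  have hcomm : ∀ (g h : A), ∀ T ∈ H,
      conjL π π' g (conjL π π' h T) = conjL π π' h (conjL π π' g T) := by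
    intro g h T hT
    rw [conjL_conjL, conjL_conjL]
    have hc : (h * g)⁻¹ * (g * h) ∈ B := by
      rw [← QuotientGroup.eq]
      rw [QuotientGroup.mk_mul, QuotientGroup.mk_mul, hab]
    calc conjL π π' (g * h) T
        = conjL π π' ((h * g) * ((h * g)⁻¹ * (g * h))) T := by rw [mul_inv_cancel_left]
      _ = conjL π π' (h * g) (conjL π π' ((h * g)⁻¹ * (g * h)) T) := (conjL_conjL _ _ _ _ _).symm
      _ = conjL π π' (h * g) T := by rw [hfix T hT _ hc]
  -- build a nonzero element of `H` by averaging
  obtain ⟨p₀, hp₀⟩ := T₁.exists_leftInverse_of_injective (LinearMap.ker_eq_bot.mpr hT₁inj)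
  set Tav : V →ₗ[ℂ] V' := ∑ b : B, conjL π π' (b : A) (T₂ ∘ₗ p₀) with hTavdef
  have hTavH : Tav ∈ H := by
    rw [memH']
    intro c hc
    rw [hTavdef, map_sum]
    simp_rw [conjL_conjL]
    exact Fintype.sum_equiv (Equiv.mulLeft (⟨c, hc⟩ : B)) _ _ (fun x => rfl)
  have hTavT₁ : Tav (T₁ w₀) = (Fintype.card B : ℂ) • T₂ w₀ := by
    have hterm : ∀ b : B, conjL π π' (b : A) (T₂ ∘ₗ p₀) (T₁ w₀) = T₂ w₀ := by
      intro b
      rw [conjL_apply]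
      have h1 : π (↑b)⁻¹ (T₁ w₀) = T₁ (σ b⁻¹ w₀) := (hT₁ b⁻¹ w₀).symm
      rw [h1]
      have h2 : p₀ (T₁ (σ b⁻¹ w₀)) = σ b⁻¹ w₀ := LinearMap.congr_fun hp₀ (σ b⁻¹ w₀)
      show π' ↑b (T₂ (p₀ (T₁ (σ b⁻¹ w₀)))) = T₂ w₀
      rw [h2, hT₂ b⁻¹ w₀]
      show π' ↑b (π' (↑b)⁻¹ (T₂ w₀)) = T₂ w₀
      rw [← Module.End.mul_apply, ← map_mul, mul_inv_cancel, map_one, Module.End.one_apply]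
    rw [hTavdef, LinearMap.sum_apply]
    simp_rw [hterm]
    rw [Finset.sum_const, Finset.card_univ, ← Nat.cast_smul_eq_nsmul ℂ]
  have hTav0 : Tav ≠ 0 := by
    intro h
    have h1 : T₂ w₀ ≠ 0 := fun h2 => hw₀ (hT₂inj (by rw [h2, map_zero]))
    have h2 : (Fintype.card B : ℂ) ≠ 0 := Nat.cast_ne_zero.mpr Fintype.card_ne_zero
    have := hTavT₁
    rw [h] at this
    simp only [LinearMap.zero_apply] at this
    exact smul_ne_zero h2 h1 this.symm
  have hHne : H ≠ ⊥ := fun h => hTav0 (by rwa [h, Submodule.mem_bot] at hTavH)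
  -- take a minimal invariant subspace of H
  set Good : Submodule ℂ (V →ₗ[ℂ] V') → Prop :=
    fun U => U ≠ ⊥ ∧ U ≤ H ∧ ∀ g : A, ∀ T ∈ U, conjL π π' g T ∈ U with hGooddef
  have hGoodH : Good H := ⟨hHne, le_refl _, hHinv⟩
  have hex : ∃ n, ∃ U, Good U ∧ Module.finrank ℂ U = n := ⟨_, H, hGoodH, rfl⟩
  obtain ⟨U, hU, hUrank⟩ := Nat.find_spec hex
  have hminEq : ∀ E, Good E → E ≤ U → E = U := by
    intro E hE hle
    apply Submodule.eq_of_le_of_finrank_eq hle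
    have h1 : Nat.find hex ≤ Module.finrank ℂ E := Nat.find_min' hex ⟨E, hE, rfl⟩
    have h2 : Module.finrank ℂ E ≤ Module.finrank ℂ U := Submodule.finrank_mono hle
    omega
  obtain ⟨T₀, hT₀U, hT₀ne⟩ := Submodule.exists_mem_ne_zero_of_ne_bot hU.1
  have hT₀H : T₀ ∈ H := hU.2.1 hT₀U
  -- every conjugation operator acts on U by a scalar
  have heig : ∀ g : A, ∃ c : ℂ, conjL π π' g T₀ = c • T₀ := by
    intro g
    have hmapsto : ∀ x ∈ U, conjL π π' g x ∈ U := fun x hx => hU.2.2 g x hx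
    set f : Module.End ℂ U := (conjL π π' g).restrict hmapsto with hfdef
    haveI : Nontrivial U := Submodule.nontrivial_iff_ne_bot.mpr hU.1
    obtain ⟨c, hc⟩ := Module.End.exists_eigenvalue f
    set E : Submodule ℂ (V →ₗ[ℂ] V') := (f.eigenspace c).map U.subtype with hEdef
    have hEmem : ∀ T : V →ₗ[ℂ] V', T ∈ E ↔ T ∈ U ∧ conjL π π' g T = c • T := by
      intro T
      constructor
      · rintro ⟨y, hy, rfl⟩
        have h1 : f y = c • y := Module.End.mem_eigenspace_iff.mp hy
        have h2 := congrArg (Submodule.subtype U) h1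
        exact ⟨y.2, h2⟩
      · rintro ⟨hTU, hTe⟩
        exact ⟨⟨T, hTU⟩, Module.End.mem_eigenspace_iff.mpr (Subtype.ext hTe), rfl⟩
    have hEle : E ≤ U := Submodule.map_subtype_le _ _
    have hEGood : Good E := by
      refine ⟨?_, le_trans hEle hU.2.1, ?_⟩
      · obtain ⟨y, hy⟩ := hc.exists_hasEigenvector
        intro hbot
        have : (y : V →ₗ[ℂ] V') ∈ E := ⟨y, hy.1, rfl⟩
        rw [hbot, Submodule.mem_bot] at this
        exact hy.2 (Subtype.ext this)
      · intro h T hT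
        obtain ⟨hTU, hTe⟩ := (hEmem T).mp hT
        rw [hEmem]
        refine ⟨hU.2.2 h T hTU, ?_⟩
        rw [hcomm g h T (hU.2.1 hTU), hTe, map_smul]
    have hEU : E = U := hminEq E hEGood hEle
    exact ⟨c, ((hEmem T₀).mp (hEU ▸ hT₀U)).2⟩
  -- eigenvalue uniqueness
  have huniq : ∀ c₁ c₂ : ℂ, c₁ • T₀ = c₂ • T₀ → c₁ = c₂ := by
    intro c₁ c₂ h
    by_contra hne
    have h1 : (c₁ - c₂) • T₀ = 0 := by rw [sub_smul, h, sub_self]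
    rcases smul_eq_zero.mp h1 with h2 | h2
    · exact hne (sub_eq_zero.mp h2)
    · exact hT₀ne h2
  set χ₀ : A → ℂ := fun g => (heig g).choose with hχ₀def
  have hχ₀ : ∀ g, conjL π π' g T₀ = χ₀ g • T₀ := fun g => (heig g).choose_spec
  have hχ₀one : χ₀ 1 = 1 := huniq _ _ (by rw [← hχ₀ 1, conjL_one, one_smul])
  have hχ₀mul : ∀ g h, χ₀ (g * h) = χ₀ g * χ₀ h := by
    intro g h
    apply huniq
    rw [← hχ₀ (g * h), ← conjL_conjL, hχ₀ h, map_smul, hχ₀ g, smul_smul, mul_comm]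
  have hχ₀ne : ∀ g, χ₀ g ≠ 0 := by
    intro g hg0
    have h1 : conjL π π' g T₀ = 0 := by rw [hχ₀ g, hg0, zero_smul]
    have h2 := congrArg (conjL π π' g⁻¹) h1
    rw [conjL_conjL, inv_mul_cancel, conjL_one, map_zero] at h2
    exact hT₀ne h2
  have hχ₀B : ∀ b ∈ B, χ₀ b = 1 := fun b hb =>
    huniq _ _ (by rw [← hχ₀ b, hfix T₀ hT₀H b hb, one_smul])
  set χA : A →* ℂˣ :=
    { toFun := fun g => Units.mk0 (χ₀ g) (hχ₀ne g)
      map_one' := Units.ext hχ₀one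
      map_mul' := fun g h => Units.ext (hχ₀mul g h) } with hχAdef
  set χ : (A ⧸ B) →* ℂˣ := QuotientGroup.lift B χA (fun b hb => Units.ext (hχ₀B b hb))
    with hχdef
  refine ⟨χ, ?_⟩
  -- the key intertwining identity
  have hCT : ∀ (g : A) (v : V), charTwist B π χ g v = χ₀ g • π g v := fun g v => rfl
  have hmain : ∀ (g : A) (v : V), π' g (T₀ v) = χ₀ g • T₀ (π g v) := by
    intro g v
    have h2 := LinearMap.congr_fun (hχ₀ g) (π g v)
    rw [conjL_apply] at h2
    have h3 : π g⁻¹ (π g v) = v := by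
      rw [← Module.End.mul_apply, ← map_mul, inv_mul_cancel, map_one, Module.End.one_apply]
    rw [h3] at h2
    exact h2
  have hkey : ∀ (g : A) (v : V), T₀ (charTwist B π χ g v) = π' g (T₀ v) := by
    intro g v
    rw [hCT, map_smul, hmain]
  -- Schur: T₀ is bijective
  have hinj : Function.Injective T₀ := by
    have hker : LinearMap.ker T₀ = ⊥ ∨ LinearMap.ker T₀ = ⊤ := by
      apply hπ.2
      intro g v hv
      rw [LinearMap.mem_ker] at hv ⊢
      have := hmain g v
      rw [hv, map_zero] at this
      rcases smul_eq_zero.mp this.symm with h | h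
      · exact absurd h (hχ₀ne g)
      · exact h
    rcases hker with h | h
    · exact LinearMap.ker_eq_bot.mp h
    · exact absurd (LinearMap.ker_eq_top.mp h) hT₀ne
  have hsurj : Function.Surjective T₀ := by
    have hrg : LinearMap.range T₀ = ⊥ ∨ LinearMap.range T₀ = ⊤ := by
      apply hπ'.2
      rintro g v ⟨u, rfl⟩
      rw [hmain g u]
      exact Submodule.smul_mem _ _ (LinearMap.mem_range_self T₀ (π g u))
    rcases hrg with h | h
    · exact absurd (LinearMap.range_eq_bot.mp h) hT₀ne
    · exact LinearMap.range_eq_top.mp h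
  set e := LinearEquiv.ofBijective T₀ ⟨hinj, hsurj⟩ with hedef
  refine ⟨e.symm, fun g v' => ?_⟩
  apply e.injective
  have h1 : e (e.symm (π' g v')) = π' g v' := e.apply_symm_apply _
  have h2 : e (charTwist B π χ g (e.symm v')) = T₀ (charTwist B π χ g (e.symm v')) := rfl
  rw [h1, h2, hkey, show T₀ (e.symm v') = v' from e.apply_symm_apply v']
end

section
/- Let A be a finite group, B a normal subgroup with A/B abelian, π an irreducible complex representation of A, and σ an irreducible constituent of the restriction of π to B. Let B(π) be the common kernel in A of all characters in X(π). Then every irreducible constituent of the restriction of π to B(π) remains irreducible upon further restriction to B. In particular σ extends to a representation of B(π) on the same space. -/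
set_option maxHeartbeats 1000000
set_option synthInstance.maxHeartbeats 1000000

lemma maschke_proj {H : Type} [Group H] [Fintype H] {V : Type} [AddCommGroup V] [Module ℂ V]
    (ρ : Representation ℂ H V) (M : Submodule ℂ V) (hM : ∀ (h : H), ∀ v ∈ M, ρ h v ∈ M) :
    ∃ Q : V →ₗ[ℂ] V, (∀ (h : H) (v : V), Q (ρ h v) = ρ h (Q v)) ∧
      (∀ v ∈ M, Q v = v) ∧ (∀ v, Q v ∈ M) := by
  obtain ⟨q, hq⟩ := Submodule.exists_isCompl M
  set pr : V →ₗ[ℂ] V := M.subtype ∘ₗ (M.projectionOnto q hq) with hpr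
  have hpr_mem : ∀ v, pr v ∈ M := fun v => (M.projectionOnto q hq v).2
  have hpr_id : ∀ v ∈ M, pr v = v := by
    intro v hv
    simp [hpr, Submodule.projectionOnto_apply_left hq ⟨v, hv⟩]
  have hinv : ∀ (h : H) (v : V), ρ h⁻¹ (ρ h v) = v := by
    intro h v
    rw [← Module.End.mul_apply, ← map_mul, inv_mul_cancel, map_one, Module.End.one_apply]
  have hinv' : ∀ (h : H) (v : V), ρ h (ρ h⁻¹ v) = v := by
    intro h v
    rw [← Module.End.mul_apply, ← map_mul, mul_inv_cancel, map_one, Module.End.one_apply]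
  refine ⟨((Fintype.card H : ℂ))⁻¹ • ∑ h : H, ρ h ∘ₗ pr ∘ₗ ρ h⁻¹, ?_, ?_, ?_⟩
  · intro k v
    have hre : ∀ h : H, (ρ h ∘ₗ pr ∘ₗ ρ h⁻¹) (ρ k v) = ρ k ((ρ (k⁻¹ * h) ∘ₗ pr ∘ₗ ρ (k⁻¹*h)⁻¹) v) := by
      intro h
      simp only [LinearMap.comp_apply]
      rw [← Module.End.mul_apply (ρ h⁻¹) (ρ k), ← map_mul]
      rw [← Module.End.mul_apply (ρ k) (ρ (k⁻¹ * h)), ← map_mul]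
      congr 2
      · group
      · group
    simp only [LinearMap.smul_apply, LinearMap.sum_apply]
    rw [Finset.sum_congr rfl (fun h _ => hre h)]
    rw [← map_sum (ρ k), ← map_smul (ρ k)]
    congr 1
    congr 1
    exact Fintype.sum_equiv (Equiv.mulLeft k⁻¹) _ _ (fun h => rfl)
  · intro v hv
    have : ∀ h : H, (ρ h ∘ₗ pr ∘ₗ ρ h⁻¹) v = v := by
      intro h
      simp only [LinearMap.comp_apply]
      rw [hpr_id _ (hM h⁻¹ v hv), hinv']
    simp only [LinearMap.smul_apply, LinearMap.sum_apply]
    rw [Finset.sum_congr rfl (fun h _ => this h), Finset.sum_const, Finset.card_univ]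
    rw [← Nat.cast_smul_eq_nsmul ℂ, smul_smul, inv_mul_cancel₀, one_smul]
    exact Nat.cast_ne_zero.mpr Fintype.card_ne_zero
  · intro v
    simp only [LinearMap.smul_apply, LinearMap.sum_apply]
    refine Submodule.smul_mem _ _ (Submodule.sum_mem _ fun h _ => ?_)
    simpa only [LinearMap.comp_apply] using hM h _ (hpr_mem _)




section AuxProof

variable {A : Type} [Group A] {V : Type} [AddCommGroup V] [Module ℂ V]

lemma mem_homSpace' {W : Type} [AddCommGroup W] [Module ℂ W] {C : Type} [Group C]
    {π : Representation ℂ C V} {ρ : Representation ℂ C W} {T : V →ₗ[ℂ] W} :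
    T ∈ homSpace π ρ ↔ ∀ g v, T (π g v) = ρ g (T v) := Iff.rfl

lemma pi_inv_apply {C : Type} [Group C] (π : Representation ℂ C V) (g : C) (v : V) :
    π g⁻¹ (π g v) = v := by
  rw [← Module.End.mul_apply, ← map_mul, inv_mul_cancel, map_one, Module.End.one_apply]

/-- Conjugation action of `A` on the space of `B`-equivariant endomorphisms. -/
def conjEndHom (B : Subgroup A) [hN : B.Normal] (π : Representation ℂ A V) :
    A →* Module.End ℂ ↥(homSpace (Res B π) (Res B π)) where
  toFun g :=
    { toFun := fun T => ⟨π g ∘ₗ T.1 ∘ₗ π g⁻¹, by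
        intro b v
        have hb' : g⁻¹ * (b : A) * g ∈ B := by
          have := hN.conj_mem (b : A) b.2 g⁻¹
          simpa using this
        have e1 : π g⁻¹ (π (b : A) v) = π (⟨g⁻¹ * b * g, hb'⟩ : B) (π g⁻¹ v) := by
          rw [← Module.End.mul_apply, ← map_mul, ← Module.End.mul_apply (π _) (π g⁻¹), ← map_mul]
          congr 2
          group
        have e2 : ∀ w, π g (π (⟨g⁻¹ * b * g, hb'⟩ : B) w) = π (b : A) (π g w) := by
          intro w
          rw [← Module.End.mul_apply, ← map_mul, ← Module.End.mul_apply (π (b:A)) (π g), ← map_mul]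
          congr 2
          group
        simp only [LinearMap.comp_apply]
        show π g ((T : V →ₗ[ℂ] V) (π g⁻¹ (π (b : A) v))) = π (b : A) (π g ((T : V →ₗ[ℂ] V) (π g⁻¹ v)))
        have e3 : (T : V →ₗ[ℂ] V) (π ((⟨g⁻¹ * ↑b * g, hb'⟩ : B) : A) (π g⁻¹ v)) =
            π ((⟨g⁻¹ * ↑b * g, hb'⟩ : B) : A) ((T : V →ₗ[ℂ] V) (π g⁻¹ v)) :=
          T.2 ⟨g⁻¹ * ↑b * g, hb'⟩ (π g⁻¹ v)
        rw [e1, e3, e2]⟩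
      map_add' := fun T S => by
        apply Subtype.ext
        simp only [Submodule.coe_add, LinearMap.comp_add, LinearMap.add_comp]
      map_smul' := fun c T => by
        apply Subtype.ext
        simp only [SetLike.val_smul, LinearMap.comp_smul, LinearMap.smul_comp, RingHom.id_apply] }
  map_one' := by
    apply LinearMap.ext; intro T; apply Subtype.ext
    simp [Module.End.one_eq_id, LinearMap.id_comp, LinearMap.comp_id]
  map_mul' g k := by
    apply LinearMap.ext; intro T; apply Subtype.ext
    apply LinearMap.ext; intro v
    simp only [LinearMap.coe_mk, AddHom.coe_mk, Module.End.mul_apply, LinearMap.comp_apply,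
      mul_inv_rev, map_mul, Module.End.mul_apply]

lemma conjEndHom_mem_B (B : Subgroup A) [B.Normal] (π : Representation ℂ A V)
    {b : A} (hb : b ∈ B) : conjEndHom B π b = 1 := by
  apply LinearMap.ext; intro T; apply Subtype.ext
  apply LinearMap.ext; intro v
  have h1 : (T : V →ₗ[ℂ] V) (π (((⟨b⁻¹, inv_mem hb⟩ : B) : A)) v) = π ((⟨b⁻¹, inv_mem hb⟩ : B) : A) ((T : V →ₗ[ℂ] V) v) :=
    T.2 ⟨b⁻¹, inv_mem hb⟩ v
  simp only [conjEndHom, MonoidHom.coe_mk, OneHom.coe_mk, LinearMap.coe_mk, AddHom.coe_mk,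
    LinearMap.comp_apply, Module.End.one_apply]
  rw [show (π b⁻¹ v : V) = π (((⟨b⁻¹, inv_mem hb⟩ : B) : A)) v from rfl, h1,
    ← Module.End.mul_apply, ← map_mul]
  simp

lemma conjEndHom_commute (B : Subgroup A) [B.Normal] (π : Representation ℂ A V)
    (hab : ∀ x y : A ⧸ B, x * y = y * x) (g k : A) :
    Commute (conjEndHom B π g) (conjEndHom B π k) := by
  have key : ∀ x y : A, conjEndHom B π (x * y) = conjEndHom B π (y * x) := by
    intro x y
    have hq : ((x * y : A) : A ⧸ B) = ((y * x : A) : A ⧸ B) := by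
      have := hab (x : A ⧸ B) (y : A ⧸ B)
      simpa [QuotientGroup.mk_mul] using this
    have hmem : (y * x)⁻¹ * (x * y) ∈ B := QuotientGroup.eq.mp hq.symm
    have : x * y = (y * x) * ((y * x)⁻¹ * (x * y)) := by group
    rw [this, map_mul, conjEndHom_mem_B B π hmem, mul_one]
  unfold Commute SemiconjBy
  rw [← map_mul, ← map_mul, key]

lemma conjEndHom_semisimple [Fintype A] [FiniteDimensional ℂ V]
    (B : Subgroup A) [B.Normal] (π : Representation ℂ A V) (g : A) :
    (conjEndHom B π g).IsSemisimple := by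
  set n := Fintype.card A with hn
  have hn0 : (n : ℂ) ≠ 0 := Nat.cast_ne_zero.mpr Fintype.card_ne_zero
  have hsq : Squarefree ((Polynomial.X : Polynomial ℂ) ^ n - Polynomial.C 1) :=
    (Polynomial.separable_X_pow_sub_C (1 : ℂ) hn0 one_ne_zero).squarefree
  refine Module.End.isSemisimple_of_squarefree_aeval_eq_zero hsq ?_
  have : (conjEndHom B π g) ^ n = 1 := by
    rw [← map_pow, pow_card_eq_one, map_one]
  simp [Polynomial.aeval_one, this]

end AuxProof

lemma key_commute {A : Type} [Group A] [Fintype A] {V : Type} [AddCommGroup V] [Module ℂ V]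
    [FiniteDimensional ℂ V] (B : Subgroup A) [B.Normal]
    (hab : ∀ x y : A ⧸ B, x * y = y * x)
    (π : Representation ℂ A V) (hπ : IsIrred π)
    (T : V →ₗ[ℂ] V) (hT : T ∈ homSpace (Res B π) (Res B π)) :
    ∀ h ∈ Bpi B π, ∀ v, T (π h v) = π h (T v) := by
  classical
  set D := homSpace (Res B π) (Res B π) with hD
  set f := conjEndHom B π with hf
  -- simultaneous diagonalization
  have htop : (⨆ χ : A → ℂ, ⨅ g : A, Module.End.eigenspace (f g) (χ g)) = ⊤ := by
    have h1 := Module.End.iSup_iInf_maxGenEigenspace_eq_top_of_iSup_maxGenEigenspace_eq_top_of_commute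
      (fun g : A => f g)
      (fun g k _ => conjEndHom_commute B π hab g k)
      (fun g => Module.End.iSup_maxGenEigenspace_eq_top _)
    calc (⨆ χ : A → ℂ, ⨅ g : A, Module.End.eigenspace (f g) (χ g))
        = ⨆ χ : A → ℂ, ⨅ g : A, Module.End.maxGenEigenspace (f g) (χ g) := by
          refine iSup_congr fun χ => iInf_congr fun g => ?_
          exact ((conjEndHom_semisimple B π g).isFinitelySemisimple.maxGenEigenspace_eq_eigenspace
            (χ g)).symm
      _ = ⊤ := h1
  -- the submodule of elements fixed by all of B(π)
  set E : Submodule ℂ ↥D :=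
    ⨅ (h : A) (_ : h ∈ Bpi B π), LinearMap.ker (f h - 1) with hE
  have hEmem : ∀ (S : ↥D), S ∈ E ↔ ∀ h ∈ Bpi B π, f h S = S := by
    intro S
    simp only [hE, Submodule.mem_iInf, LinearMap.mem_ker, LinearMap.sub_apply,
      Module.End.one_apply, sub_eq_zero]
  -- every simultaneous eigenspace is contained in E
  have hkey : ∀ χ : A → ℂ, (⨅ g : A, Module.End.eigenspace (f g) (χ g)) ≤ E := by
    intro χ
    by_cases hbot : (⨅ g : A, Module.End.eigenspace (f g) (χ g)) = ⊥
    · rw [hbot]; exact bot_le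
    · obtain ⟨T₀, hT₀mem, hT₀ne⟩ := Submodule.exists_mem_ne_zero_of_ne_bot hbot
      have heig : ∀ g : A, f g T₀ = χ g • T₀ := fun g =>
        Module.End.mem_eigenspace_iff.mp (Submodule.mem_iInf _ |>.mp hT₀mem g)
      have hcan : ∀ a b : ℂ, a • T₀ = b • T₀ → a = b := fun a b hab' =>
        smul_left_injective ℂ hT₀ne hab'
      have hχ1 : χ 1 = 1 := by
        refine hcan _ _ ?_
        rw [← heig 1, map_one, Module.End.one_apply, one_smul]
      have hχmul : ∀ g k : A, χ (g * k) = χ g * χ k := by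
        intro g k
        refine hcan _ _ ?_
        rw [← heig (g * k), map_mul, Module.End.mul_apply, heig k, map_smul, heig g,
          smul_smul, mul_comm (χ k) (χ g)]
      have hχne : ∀ g : A, χ g ≠ 0 := by
        intro g hg0
        have : χ g * χ g⁻¹ = 1 := by rw [← hχmul, mul_inv_cancel, hχ1]
        rw [hg0, zero_mul] at this
        exact zero_ne_one this
      have hχB : ∀ b ∈ B, χ b = 1 := by
        intro b hb
        refine hcan _ _ ?_
        rw [← heig b, conjEndHom_mem_B B π hb, Module.End.one_apply, one_smul]
      -- build the character of A ⧸ B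
      set χu : A →* ℂˣ :=
        { toFun := fun g => Units.mk0 (χ g) (hχne g)
          map_one' := by ext; simp [hχ1]
          map_mul' := fun g k => by ext; simp [hχmul] } with hχu
      have hlift : ∀ b ∈ B, χu b = 1 := by
        intro b hb; ext; simp [hχu, hχB b hb]
      set χbar : (A ⧸ B) →* ℂˣ := QuotientGroup.lift B χu hlift with hχbar
      have hχbar_mk : ∀ g : A, χbar (g : A ⧸ B) = χu g := fun g => rfl
      -- T₀ as an operator on V
      have hT₀ne' : (T₀ : V →ₗ[ℂ] V) ≠ 0 := by
        intro h0
        exact hT₀ne (Subtype.ext h0)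
      have hop : ∀ g : A, π g ∘ₗ (T₀ : V →ₗ[ℂ] V) ∘ₗ π g⁻¹ = χ g • (T₀ : V →ₗ[ℂ] V) := by
        intro g
        have := congrArg Subtype.val (heig g)
        exact this
      have hpt : ∀ (g : A) (v : V), π g ((T₀ : V →ₗ[ℂ] V) (π g⁻¹ v)) =
          χ g • (T₀ : V →ₗ[ℂ] V) v := by
        intro g v
        have := LinearMap.congr_fun (hop g) v
        simpa using this
      have hTπ : ∀ (g : A) (v : V), (T₀ : V →ₗ[ℂ] V) (π g v) =
          (χ g)⁻¹ • π g ((T₀ : V →ₗ[ℂ] V) v) := by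
        intro g v
        have h1 := hpt g (π g v)
        rw [pi_inv_apply] at h1
        rw [h1, inv_smul_smul₀ (hχne g)]
      -- T₀ is bijective
      have hker : LinearMap.ker (T₀ : V →ₗ[ℂ] V) = ⊥ := by
        rcases hπ.2 (LinearMap.ker (T₀ : V →ₗ[ℂ] V)) (fun g v hv => by
          rw [LinearMap.mem_ker] at hv ⊢
          rw [hTπ g v, hv, map_zero, smul_zero]) with h | h
        · exact h
        · exact absurd (LinearMap.ker_eq_top.mp h) hT₀ne'
      have hrange : LinearMap.range (T₀ : V →ₗ[ℂ] V) = ⊤ := by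
        rcases hπ.2 (LinearMap.range (T₀ : V →ₗ[ℂ] V)) (fun g v hv => by
          obtain ⟨w, rfl⟩ := hv
          rw [show π g ((T₀ : V →ₗ[ℂ] V) w) = χ g • (T₀ : V →ₗ[ℂ] V) (π g w) by
            rw [hTπ g w, smul_inv_smul₀ (hχne g)]]
          exact Submodule.smul_mem _ _ ⟨π g w, rfl⟩) with h | h
        · exact absurd (LinearMap.range_eq_bot.mp h) hT₀ne'
        · exact h
      have hbij : Function.Bijective (T₀ : V →ₗ[ℂ] V) :=
        ⟨LinearMap.ker_eq_bot.mp hker, LinearMap.range_eq_top.mp hrange⟩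
      -- χbar lies in X(π)
      have hX : χbar ∈ Xgrp B π := by
        refine ⟨LinearEquiv.ofBijective (T₀ : V →ₗ[ℂ] V) hbij, ?_⟩
        intro g v
        have hct : charTwist B π χbar g v = χ g • π g v := by
          simp only [charTwist, twist, MonoidHom.coe_mk, OneHom.coe_mk, LinearMap.smul_apply]
          congr 1
        show (T₀ : V →ₗ[ℂ] V) (charTwist B π χbar g v) = π g ((T₀ : V →ₗ[ℂ] V) v)
        rw [hct, map_smul, hTπ g v, smul_inv_smul₀ (hχne g)]
      -- characters in X(π) are trivial on B(π)
      have hχBpi : ∀ h ∈ Bpi B π, χ h = 1 := by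
        intro h hh
        rw [Bpi, Subgroup.mem_iInf] at hh
        have h2 := Subgroup.mem_iInf.mp (hh χbar) hX
        rw [MonoidHom.mem_ker, MonoidHom.comp_apply] at h2
        have h3 : χu h = 1 := by
          rw [← hχbar_mk h]
          simpa using h2
        have := congrArg Units.val h3
        simpa [hχu] using this
      intro S hS
      rw [hEmem]
      intro h hh
      have : f h S = χ h • S :=
        Module.End.mem_eigenspace_iff.mp (Submodule.mem_iInf _ |>.mp hS h)
      rw [this, hχBpi h hh, one_smul]
  -- conclude
  intro h hh v
  have hTD : (⟨T, hT⟩ : ↥D) ∈ E := by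
    have h1 : (⟨T, hT⟩ : ↥D) ∈ (⊤ : Submodule ℂ ↥D) := Submodule.mem_top
    rw [← htop] at h1
    exact (iSup_le hkey : _ ≤ E) h1
  have h2 := (hEmem _).mp hTD h hh
  have h3 : π h ∘ₗ T ∘ₗ π h⁻¹ = T := congrArg Subtype.val h2
  have h4 := LinearMap.congr_fun h3 (π h v)
  simp only [LinearMap.comp_apply] at h4
  rw [pi_inv_apply] at h4
  rw [h4]

section AuxProof2

variable {H : Type} [Group H] {V W U : Type} [AddCommGroup V] [Module ℂ V]
  [AddCommGroup W] [Module ℂ W] [AddCommGroup U] [Module ℂ U]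

/-- The subrepresentation on an invariant submodule. -/
def subRep (ρ : Representation ℂ H V) (M : Submodule ℂ V)
    (hM : ∀ (h : H), ∀ v ∈ M, ρ h v ∈ M) : Representation ℂ H ↥M where
  toFun h := (ρ h).restrict (fun v hv => hM h v hv)
  map_one' := by
    apply LinearMap.ext; intro v; apply Subtype.ext
    simp [LinearMap.restrict_apply]
  map_mul' g k := by
    apply LinearMap.ext; intro v; apply Subtype.ext
    simp [LinearMap.restrict_apply, map_mul, Module.End.mul_apply]

@[simp] lemma subRep_apply (ρ : Representation ℂ H V) (M : Submodule ℂ V)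
    (hM : ∀ (h : H), ∀ v ∈ M, ρ h v ∈ M) (h : H) (v : ↥M) :
    (subRep ρ M hM h v : V) = ρ h (v : V) := rfl

/-- Transport of a representation along a linear equivalence. -/
def conjRepEquiv (e : W ≃ₗ[ℂ] U) (ρ : Representation ℂ H U) : Representation ℂ H W where
  toFun h := e.symm.toLinearMap ∘ₗ ρ h ∘ₗ e.toLinearMap
  map_one' := by
    apply LinearMap.ext; intro w
    simp
  map_mul' g k := by
    apply LinearMap.ext; intro w
    simp [map_mul, Module.End.mul_apply]

@[simp] lemma conjRepEquiv_apply (e : W ≃ₗ[ℂ] U) (ρ : Representation ℂ H U) (h : H) (w : W) :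
    conjRepEquiv e ρ h w = e.symm (ρ h (e w)) := rfl

end AuxProof2

theorem restriction_to_Bpi_irreducible {A : Type} [Group A] [Fintype A] {V W : Type}
    [AddCommGroup V] [Module ℂ V] [FiniteDimensional ℂ V]
    [AddCommGroup W] [Module ℂ W] [FiniteDimensional ℂ W]
    (B : Subgroup A) [B.Normal] (hab : ∀ x y : A ⧸ B, x * y = y * x)
    (π : Representation ℂ A V) (hπ : IsIrred π)
    (σ : Representation ℂ B W) (hσ : IsIrred σ) (hocc : Occurs σ (Res B π)) :
    (∀ {W' : Type} [AddCommGroup W'] [Module ℂ W']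
        (τ : Representation ℂ (Bpi B π) W'),
        IsIrred τ → Occurs τ (Res (Bpi B π) π) →
        IsIrred (τ.comp (Subgroup.inclusion (le_Bpi B π)))) ∧
      ∃ σt : Representation ℂ (Bpi B π) W,
        ∀ b : B, σt (Subgroup.inclusion (le_Bpi B π) b) = σ b := by
  classical
  -- Part 1
  have part1 : ∀ {W' : Type} [AddCommGroup W'] [Module ℂ W']
      (τ : Representation ℂ (Bpi B π) W'),
      IsIrred τ → Occurs τ (Res (Bpi B π) π) →
      IsIrred (τ.comp (Subgroup.inclusion (le_Bpi B π))) := by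
    intro W' _ _ τ hτ hoccτ
    obtain ⟨S, hS, hSinj⟩ := hoccτ
    refine ⟨hτ.1, ?_⟩
    intro p hp
    set M := Submodule.map S p with hMdef
    have hMB : ∀ (b : B), ∀ v ∈ M, (Res B π) b v ∈ M := by
      rintro b v ⟨w, hw, rfl⟩
      refine ⟨τ (Subgroup.inclusion (le_Bpi B π) b) w, hp b w hw, ?_⟩
      rw [hS]
      show π ((Subgroup.inclusion (le_Bpi B π) b : Bpi B π) : A) (S w) = π (b : A) (S w)
      rw [Subgroup.coe_inclusion]
    obtain ⟨Q, hQcomm, hQid, hQmem⟩ := maschke_proj (Res B π) M hMB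
    have hQD : Q ∈ homSpace (Res B π) (Res B π) := mem_homSpace'.mpr hQcomm
    have hQBpi := key_commute B hab π hπ Q hQD
    have hMfix : ∀ v, v ∈ M ↔ Q v = v := by
      intro v
      exact ⟨fun hv => hQid v hv, fun hv => hv ▸ hQmem v⟩
    have hMBpi : ∀ (c : Bpi B π), ∀ v ∈ M, π (c : A) v ∈ M := by
      intro c v hv
      rw [hMfix]
      rw [hQBpi (c : A) c.2 v, (hMfix v).mp hv]
    have hpBpi : ∀ (c : Bpi B π), ∀ w ∈ p, τ c w ∈ p := by
      intro c w hw
      have h1 : S (τ c w) = π (c : A) (S w) := hS c w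
      have h2 : π (c : A) (S w) ∈ M := hMBpi c (S w) (Submodule.mem_map_of_mem hw)
      rw [← h1] at h2
      obtain ⟨y, hy, hey⟩ := h2
      rwa [← hSinj hey]
    exact hτ.2 p hpBpi
  refine ⟨part1, ?_⟩
  -- Part 2
  obtain ⟨T, hTeq, hTinj⟩ := hocc
  set 𝒮 : Set (Submodule ℂ V) :=
    {M | (∀ (c : Bpi B π), ∀ v ∈ M, π (c : A) v ∈ M) ∧
      ∃ T' : W →ₗ[ℂ] V, (∀ (b : B) (w : W), T' (σ b w) = π (b : A) (T' w)) ∧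
        Function.Injective T' ∧ LinearMap.range T' ≤ M} with h𝒮
  have htop𝒮 : (⊤ : Submodule ℂ V) ∈ 𝒮 :=
    ⟨fun c v _ => Submodule.mem_top, T, hTeq, hTinj, le_top⟩
  set ks : Set ℕ := (fun M : Submodule ℂ V => Module.finrank ℂ ↥M) '' 𝒮 with hks
  have hksne : ks.Nonempty := ⟨_, Set.mem_image_of_mem _ htop𝒮⟩
  obtain ⟨M, hM𝒮, hMrank⟩ := Nat.sInf_mem hksne
  have hmin : ∀ N ∈ 𝒮, Module.finrank ℂ ↥M ≤ Module.finrank ℂ ↥N := by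
    intro N hN
    exact le_of_eq_of_le hMrank (Nat.sInf_le (Set.mem_image_of_mem _ hN))
  obtain ⟨hMinv, T', hT'eq, hT'inj, hT'range⟩ := hM𝒮
  -- dichotomy for invariant submodules of M
  have hdich : ∀ N : Submodule ℂ V, N ≤ M →
      (∀ (c : Bpi B π), ∀ v ∈ N, π (c : A) v ∈ N) → N = ⊥ ∨ N = M := by
    intro N hNM hNinv
    obtain ⟨Q, hQcomm, hQid, hQmem⟩ :=
      maschke_proj (Res (Bpi B π) π) N (fun c v hv => hNinv c v hv)
    have hQB : ∀ (b : B) (w : W), (Q ∘ₗ T') (σ b w) = π (b : A) ((Q ∘ₗ T') w) := by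
      intro b w
      simp only [LinearMap.comp_apply, hT'eq b w]
      have h1 := hQcomm (Subgroup.inclusion (le_Bpi B π) b) (T' w)
      exact h1
    have hker := hσ.2 (LinearMap.ker (Q ∘ₗ T')) (fun b w hw => by
      rw [LinearMap.mem_ker] at hw ⊢
      rw [hQB b w, hw, map_zero])
    rcases hker with hk | hk
    · right
      have hN𝒮 : N ∈ 𝒮 := by
        refine ⟨hNinv, Q ∘ₗ T', hQB, LinearMap.ker_eq_bot.mp hk, ?_⟩
        rintro v ⟨w, rfl⟩
        exact hQmem _
      exact Submodule.eq_of_le_of_finrank_le hNM (hmin N hN𝒮)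
    · left
      have hQT0 : ∀ w, Q (T' w) = 0 := by
        intro w
        have h1 : w ∈ LinearMap.ker (Q ∘ₗ T') := hk ▸ Submodule.mem_top
        simpa using h1
      have hN'inv : ∀ (c : Bpi B π), ∀ v ∈ LinearMap.ker Q ⊓ M, π (c : A) v ∈ LinearMap.ker Q ⊓ M := by
        rintro c v ⟨hv1, hv2⟩
        refine ⟨?_, hMinv c v hv2⟩
        simp only [SetLike.mem_coe, LinearMap.mem_ker] at hv1 ⊢
        have hc : Q (π (c : A) v) = π (c : A) (Q v) := hQcomm c v
        rw [hc, hv1, map_zero]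
      have hN'𝒮 : LinearMap.ker Q ⊓ M ∈ 𝒮 := by
        refine ⟨hN'inv, T', hT'eq, hT'inj, ?_⟩
        rintro v ⟨w, rfl⟩
        exact ⟨LinearMap.mem_ker.mpr (hQT0 w), hT'range ⟨w, rfl⟩⟩
      have hN'M : LinearMap.ker Q ⊓ M = M :=
        Submodule.eq_of_le_of_finrank_le inf_le_right (hmin _ hN'𝒮)
      rw [eq_bot_iff]
      intro v hv
      have hvM : v ∈ M := hNM hv
      have hvN' : v ∈ LinearMap.ker Q ⊓ M := hN'M.symm ▸ hvM
      have h0 : Q v = 0 := LinearMap.mem_ker.mp hvN'.1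
      have h1 : Q v = v := hQid v hv
      rw [Submodule.mem_bot, ← h1]
      exact h0
  -- the subrepresentation on M
  set τM : Representation ℂ (Bpi B π) ↥M := subRep (Res (Bpi B π) π) M (fun c v hv => hMinv c v hv)
    with hτM
  -- a nonzero vector of W
  have hWne : ∃ w₀ : W, w₀ ≠ 0 := by
    by_contra hcon
    push_neg at hcon
    exact hσ.1 (Submodule.eq_bot_iff _ |>.mpr (fun w _ => hcon w))
  obtain ⟨w₀, hw₀⟩ := hWne
  -- τM is irreducible
  have hτMirr : IsIrred τM := by
    constructor
    · intro hcon
      have h1 : (⟨T' w₀, hT'range ⟨w₀, rfl⟩⟩ : ↥M) = 0 := by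
        rw [← Submodule.mem_bot ℂ, ← hcon]
        exact Submodule.mem_top
      have h2 : T' w₀ = 0 := congrArg Subtype.val h1
      exact hw₀ (hT'inj (by rw [h2, map_zero]))
    · intro p hp
      have hNinv : ∀ (c : Bpi B π), ∀ v ∈ Submodule.map M.subtype p, π (c : A) v ∈ Submodule.map M.subtype p := by
        rintro c v ⟨y, hy, rfl⟩
        exact ⟨τM c y, hp c y hy, rfl⟩
      rcases hdich (Submodule.map M.subtype p) (Submodule.map_subtype_le M p) hNinv with h | h
      · left
        rw [eq_bot_iff]
        intro x hx
        have h1 : (x : V) ∈ Submodule.map M.subtype p := ⟨x, hx, rfl⟩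
        rw [h, Submodule.mem_bot] at h1
        simpa [Submodule.mem_bot] using Subtype.ext h1
      · right
        rw [eq_top_iff]
        rintro x -
        have h1 : (x : V) ∈ Submodule.map M.subtype p := by rw [h]; exact x.2
        obtain ⟨y, hy, hey⟩ := h1
        rwa [show y = x from Subtype.ext hey] at hy
  -- τM occurs in the restriction of π
  have hτMocc : Occurs τM (Res (Bpi B π) π) := by
    refine ⟨M.subtype, fun c v => rfl, Subtype.val_injective⟩
  have hirr := part1 τM hτMirr hτMocc
  -- the corestriction of T'
  set T'' : W →ₗ[ℂ] ↥M := LinearMap.codRestrict M T' (fun w => hT'range ⟨w, rfl⟩) with hT''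
  have hT''eq : ∀ (b : B) (w : W),
      T'' (σ b w) = (τM.comp (Subgroup.inclusion (le_Bpi B π))) b (T'' w) := by
    intro b w
    apply Subtype.ext
    show T' (σ b w) = π ((Subgroup.inclusion (le_Bpi B π) b : Bpi B π) : A) (T' w)
    rw [Subgroup.coe_inclusion]
    exact hT'eq b w
  have hT''inj : Function.Injective T'' := by
    intro a b hab'
    exact hT'inj (congrArg Subtype.val hab')
  -- the range of T'' is everything
  have hrange'' : LinearMap.range T'' = ⊤ := by
    rcases hirr.2 (LinearMap.range T'') (by
      rintro b v ⟨w, rfl⟩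
      exact ⟨σ b w, hT''eq b w⟩) with h | h
    · exfalso
      have h1 : T'' w₀ ∈ LinearMap.range T'' := ⟨w₀, rfl⟩
      rw [h, Submodule.mem_bot] at h1
      exact hw₀ (hT''inj (by rw [h1, map_zero]))
    · exact h
  have hbij : Function.Bijective T'' := ⟨hT''inj, LinearMap.range_eq_top.mp hrange''⟩
  set e : W ≃ₗ[ℂ] ↥M := LinearEquiv.ofBijective T'' hbij with he
  refine ⟨conjRepEquiv e τM, ?_⟩
  intro b
  apply LinearMap.ext
  intro w
  have h1 : e (σ b w) = τM (Subgroup.inclusion (le_Bpi B π) b) (e w) := by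
    show T'' (σ b w) = τM (Subgroup.inclusion (le_Bpi B π) b) (T'' w)
    exact hT''eq b w
  rw [conjRepEquiv_apply, ← h1, LinearEquiv.symm_apply_apply]
end

section
/- Let A be a finite group, B ⊴ A with A/B abelian, and σ an irreducible representation of B. Then the induced representation Ind_B^A σ decomposes as a direct sum of irreducible representations of A all of which lie in a single orbit under twisting by characters of A/B; i.e. if π and π' are irreducible constituents of Ind_B^A σ then π' ≅ π ⊗ χ for some character χ of A/B. -/
set_option maxHeartbeats 1000000
set_option synthInstance.maxHeartbeats 1000000

open Module in
lemma exists_common_eigenvector {E : Type*} [AddCommGroup E] [Module ℂ E]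
    [FiniteDimensional ℂ E] [Nontrivial E] {ι : Type*} (f : ι → Module.End ℂ E)
    (hcomm : ∀ i j, f i * f j = f j * f i) :
    ∃ v : E, v ≠ 0 ∧ ∀ i, ∃ μ : ℂ, f i v = μ • v := by
  classical
  set S : Set (Submodule ℂ E) := {p | p ≠ ⊥ ∧ ∀ i, ∀ x ∈ p, f i x ∈ p} with hS
  have htop : (⊤ : Submodule ℂ E) ∈ S := ⟨by
    obtain ⟨x, hx⟩ := exists_ne (0 : E)
    intro h
    exact hx (by simpa [h] using Submodule.mem_top (R := ℂ) (x := x)), fun i x _ => trivial⟩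
  set N : Set ℕ := (fun p : Submodule ℂ E => finrank ℂ p) '' S with hN
  have hNne : N.Nonempty := ⟨_, ⟨⊤, htop, rfl⟩⟩
  obtain ⟨p, hpS, hpr⟩ := Nat.sInf_mem hNne
  have hmin : ∀ q ∈ S, finrank ℂ p ≤ finrank ℂ q := by
    intro q hq
    have hpr' : finrank ℂ p = sInf N := hpr
    rw [hpr']
    exact Nat.sInf_le ⟨q, hq, rfl⟩
  have hscal : ∀ i, ∃ μ : ℂ, ∀ x ∈ p, f i x = μ • x := by
    intro i
    have hnt : Nontrivial p := Submodule.nontrivial_iff_ne_bot.mpr hpS.1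
    set g : Module.End ℂ p := (f i).restrict (hpS.2 i)
    obtain ⟨μ, hμ⟩ := Module.End.exists_eigenvalue g
    obtain ⟨v, hv⟩ := hμ.exists_hasEigenvector
    refine ⟨μ, ?_⟩
    set q : Submodule ℂ E := p ⊓ LinearMap.ker (f i - μ • (1 : Module.End ℂ E)) with hq
    have hqS : q ∈ S := by
      constructor
      · rw [Submodule.ne_bot_iff q]
        refine ⟨(v : E), ⟨v.2, ?_⟩, by simpa using hv.2⟩
        have := hv.apply_eq_smul
        have h2 : f i (v : E) = μ • (v : E) := congrArg Subtype.val this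
        simp [LinearMap.mem_ker, LinearMap.sub_apply, h2]
      · intro j x hx
        refine ⟨hpS.2 j x hx.1, ?_⟩
        have hx2 : f i x = μ • x := by
          have := hx.2
          simpa [LinearMap.mem_ker, LinearMap.sub_apply, sub_eq_zero] using this
        have : f i (f j x) = f j (f i x) := by
          have := congrArg (fun g => g x) (hcomm i j)
          simpa [Module.End.mul_apply] using this
        simp [LinearMap.mem_ker, LinearMap.sub_apply, sub_eq_zero, this, hx2, map_smul]
    have hqp : q = p := by
      refine Submodule.eq_of_le_of_finrank_le inf_le_left ?_
      exact hmin q hqS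
    intro x hx
    have : x ∈ q := hqp ▸ hx
    simpa [LinearMap.mem_ker, LinearMap.sub_apply, sub_eq_zero] using this.2
  obtain ⟨x, hxp, hx0⟩ := (Submodule.ne_bot_iff p).mp hpS.1
  refine ⟨x, hx0, fun i => ?_⟩
  obtain ⟨μ, hμ⟩ := hscal i
  exact ⟨μ, hμ x hxp⟩

section Helpers

variable {A : Type} [Group A] {V W : Type}
  [AddCommGroup V] [Module ℂ V] [AddCommGroup W] [Module ℂ W]

lemma exists_nonzero_equivariant (B : Subgroup A) (σ : Representation ℂ B W)
    (π : Representation ℂ A V) (h : homSpace π (ind B.subtype σ) ≠ ⊥) :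
    ∃ S : V →ₗ[ℂ] W, (∀ b : B, ∀ v, S (π (↑b) v) = σ b (S v)) ∧ S ≠ 0 := by
  obtain ⟨T, hTmem, hT0⟩ := (Submodule.ne_bot_iff _).mp h
  have hT : ∀ g v, T (π g v) = (ind B.subtype σ) g (T v) := hTmem
  let ev : ↥(indSpace B.subtype σ) →ₗ[ℂ] W :=
    { toFun := fun F => F.1 1
      map_add' := fun F G => rfl
      map_smul' := fun c F => rfl }
  have key : ∀ (g : A) (v : V), (T v).1 g = ev (T (π g v)) := by
    intro g v
    have h1 : T (π g v) = (ind B.subtype σ) g (T v) := hT g v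
    show (T v).1 g = (T (π g v)).1 1
    rw [h1]
    show (T v).1 g = (T v).1 (1 * g)
    rw [one_mul]
  refine ⟨ev ∘ₗ T, ?_, ?_⟩
  · intro b v
    show (T (π (↑b) v)).1 1 = σ b ((T v).1 1)
    rw [hT (↑b) v]
    show (T v).1 (1 * ↑b) = σ b ((T v).1 1)
    have h2 := (T v).2 b 1
    simpa using h2
  · intro hzero
    apply hT0
    apply LinearMap.ext; intro v
    apply Subtype.ext; funext g
    have := key g v
    rw [this]
    show (ev ∘ₗ T) (π g v) = (0 : ↥(indSpace B.subtype σ)).1 g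
    rw [hzero]
    rfl

lemma surjective_of_equivariant (B : Subgroup A) (σ : Representation ℂ B W)
    (hσ : IsIrred σ) (π : Representation ℂ A V) (S : V →ₗ[ℂ] W)
    (hequi : ∀ b : B, ∀ v, S (π (↑b) v) = σ b (S v)) (hS0 : S ≠ 0) :
    Function.Surjective S := by
  have hinv : ∀ (b : B) (w : W), w ∈ LinearMap.range S → σ b w ∈ LinearMap.range S := by
    rintro b w ⟨v, rfl⟩
    exact ⟨π (↑b) v, hequi b v⟩
  rcases hσ.2 (LinearMap.range S) hinv with h | h
  · exact absurd (LinearMap.range_eq_bot.mp h) hS0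
  · exact LinearMap.range_eq_top.mp h

lemma exists_equivariant_section [Finite A] (B : Subgroup A) (σ : Representation ℂ B W)
    (π : Representation ℂ A V) (S : V →ₗ[ℂ] W)
    (hequi : ∀ b : B, ∀ v, S (π (↑b) v) = σ b (S v))
    (hsurj : Function.Surjective S) :
    ∃ P : W →ₗ[ℂ] V, (∀ b : B, ∀ w, P (σ b w) = π (↑b) (P w)) ∧ ∀ w, S (P w) = w := by
  classical
  haveI : Fintype B := Fintype.ofFinite B
  obtain ⟨P0, hP0⟩ := S.exists_rightInverse_of_surjective (LinearMap.range_eq_top.mpr hsurj)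
  have hP0' : ∀ w, S (P0 w) = w := fun w => LinearMap.congr_fun hP0 w
  set P : W →ₗ[ℂ] V :=
    (Fintype.card B : ℂ)⁻¹ • ∑ b : B, (π (↑b)) ∘ₗ P0 ∘ₗ (σ b⁻¹) with hP
  have hPw : ∀ w, P w = (Fintype.card B : ℂ)⁻¹ • ∑ b : B, π (↑b) (P0 (σ b⁻¹ w)) := by
    intro w
    simp [hP, LinearMap.sum_apply]
  have hcard : ((Fintype.card B : ℂ)) ≠ 0 := by
    exact_mod_cast Fintype.card_ne_zero
  refine ⟨P, ?_, ?_⟩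
  · intro c w
    rw [hPw, hPw, map_smul]
    congr 1
    rw [map_sum]
    refine (Fintype.sum_equiv (Equiv.mulLeft c) _ _ ?_).symm
    intro b
    have e2 : σ ((Equiv.mulLeft c) b)⁻¹ (σ c w) = σ b⁻¹ w := by
      rw [← Module.End.mul_apply, ← map_mul]
      congr 1
      simp [mul_assoc]
    rw [e2]
    simp only [Equiv.coe_mulLeft, Subgroup.coe_mul, map_mul, Module.End.mul_apply]
  · intro w
    rw [hPw, map_smul, map_sum]
    have hterm : ∀ b : B, S (π (↑b) (P0 (σ b⁻¹ w))) = w := by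
      intro b
      rw [hequi b, hP0']
      rw [← Module.End.mul_apply, ← map_mul]
      simp
    rw [Finset.sum_congr rfl (fun b _ => hterm b)]
    rw [Finset.sum_const, Finset.card_univ]
    rw [← Nat.cast_smul_eq_nsmul ℂ, smul_smul, inv_mul_cancel₀ hcard, one_smul]

end Helpers

theorem ind_constituents_single_twist_orbit {A : Type} [Group A] [Fintype A]
    {W : Type} [AddCommGroup W] [Module ℂ W] [FiniteDimensional ℂ W]
    (B : Subgroup A) [B.Normal] (hab : ∀ x y : A ⧸ B, x * y = y * x)
    (σ : Representation ℂ B W) (hσ : IsIrred σ)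
    {V V' : Type} [AddCommGroup V] [Module ℂ V] [FiniteDimensional ℂ V]
    [AddCommGroup V'] [Module ℂ V'] [FiniteDimensional ℂ V']
    (π : Representation ℂ A V) (hπ : IsIrred π)
    (π' : Representation ℂ A V') (hπ' : IsIrred π')
    (h1 : homSpace π (ind B.subtype σ) ≠ ⊥)
    (h2 : homSpace π' (ind B.subtype σ) ≠ ⊥) :
    ∃ χ : (A ⧸ B) →* ℂˣ, RepIso π' (charTwist B π χ) := by
  classical
  -- Step 1: nonzero B-equivariant maps to W
  obtain ⟨S, hSeq, hS0⟩ := exists_nonzero_equivariant B σ π h1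
  obtain ⟨S', hS'eq, hS'0⟩ := exists_nonzero_equivariant B σ π' h2
  have hSsurj := surjective_of_equivariant B σ hσ π S hSeq hS0
  have hS'surj := surjective_of_equivariant B σ hσ π' S' hS'eq hS'0
  obtain ⟨P, hPeq, hPsec⟩ := exists_equivariant_section B σ π S hSeq hSsurj
  have hPinj : ∀ w, P w = 0 → w = 0 := by
    intro w hw
    have := hPsec w
    rw [hw, map_zero] at this
    exact this.symm
  -- Step 2: Q : V' → V nonzero B-equivariant
  set Q : V' →ₗ[ℂ] V := P ∘ₗ S' with hQ
  have hQeq : ∀ (b : B) (v : V'), Q (π' (↑b) v) = π (↑b) (Q v) := by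
    intro b v
    show P (S' (π' (↑b) v)) = π (↑b) (P (S' v))
    rw [hS'eq b v, hPeq b (S' v)]
  have hQ0 : Q ≠ 0 := by
    intro hz
    apply hS'0
    apply LinearMap.ext; intro v
    have h3 : P (S' v) = 0 := LinearMap.congr_fun hz v
    have h4 := hPsec (S' v)
    rw [h3, map_zero] at h4
    rw [LinearMap.zero_apply]
    exact h4.symm
  -- the space U of B-equivariant maps V' → V
  set U : Submodule ℂ (V' →ₗ[ℂ] V) := homSpace (Res B π') (Res B π) with hU
  have hQU : Q ∈ U := hQeq
  -- conjugation action of A on Hom(V', V)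
  let cmap : A → (V' →ₗ[ℂ] V) →ₗ[ℂ] (V' →ₗ[ℂ] V) := fun a =>
    { toFun := fun T => (π a) ∘ₗ T ∘ₗ (π' a⁻¹)
      map_add' := by intro T T'; apply LinearMap.ext; intro v; simp
      map_smul' := by intro c T; apply LinearMap.ext; intro v; simp }
  have cmap_apply : ∀ a (T : V' →ₗ[ℂ] V) v, cmap a T v = π a (T (π' a⁻¹ v)) :=
    fun a T v => rfl
  have hmul : ∀ a a' (T : V' →ₗ[ℂ] V), cmap a (cmap a' T) = cmap (a * a') T := by
    intro a a' T
    apply LinearMap.ext; intro v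
    rw [cmap_apply, cmap_apply, cmap_apply]
    rw [mul_inv_rev, map_mul π, map_mul π', Module.End.mul_apply, Module.End.mul_apply]
  have hBfix : ∀ c : A, c ∈ B → ∀ T ∈ U, cmap c T = T := by
    intro c hc T hT
    have hT' : ∀ (b : B) (v : V'), T (π' (↑b) v) = π (↑b) (T v) := hT
    apply LinearMap.ext; intro v
    rw [cmap_apply]
    have h5 : π' c⁻¹ v = π' (↑((⟨c, hc⟩ : B)⁻¹)) v := rfl
    rw [h5, hT' ((⟨c, hc⟩ : B)⁻¹) v]
    show π c (π c⁻¹ (T v)) = T v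
    rw [← Module.End.mul_apply, ← map_mul]
    simp
  have hcmapU : ∀ a, ∀ T ∈ U, cmap a T ∈ U := by
    intro a T hT
    have hT' : ∀ (b : B) (v : V'), T (π' (↑b) v) = π (↑b) (T v) := hT
    intro b v
    show cmap a T (π' (↑b) v) = π (↑b) (cmap a T v)
    rw [cmap_apply, cmap_apply]
    have hb' : (a⁻¹ * ↑b * a) ∈ B := by
      have := ‹B.Normal›.conj_mem (↑b) b.2 a⁻¹
      simpa using this
    have e1 : π' a⁻¹ (π' (↑b) v) = π' (↑(⟨a⁻¹ * ↑b * a, hb'⟩ : B)) (π' a⁻¹ v) := by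
      show π' a⁻¹ (π' (↑b) v) = π' (a⁻¹ * ↑b * a) (π' a⁻¹ v)
      rw [← Module.End.mul_apply, ← map_mul, ← Module.End.mul_apply, ← map_mul]
      congr 1
      group
    rw [e1, hT' ⟨a⁻¹ * ↑b * a, hb'⟩ (π' a⁻¹ v)]
    show π a (π (a⁻¹ * ↑b * a) (T (π' a⁻¹ v))) = π (↑b) (π a (T (π' a⁻¹ v)))
    rw [← Module.End.mul_apply, ← map_mul, ← Module.End.mul_apply, ← map_mul]
    congr 2
    group
  -- restrict to U
  let f : A → Module.End ℂ ↥U := fun a => (cmap a).restrict (fun x hx => hcmapU a x hx)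
  have f_val : ∀ a (x : ↥U), ((f a x : ↥U) : V' →ₗ[ℂ] V) = cmap a (x : V' →ₗ[ℂ] V) :=
    fun a x => rfl
  have hcomm : ∀ a a', f a * f a' = f a' * f a := by
    intro a a'
    apply LinearMap.ext; intro x
    apply Subtype.ext
    show cmap a (cmap a' (x : V' →ₗ[ℂ] V)) = cmap a' (cmap a (x : V' →ₗ[ℂ] V))
    rw [hmul, hmul]
    have hc : ((a' * a)⁻¹ * (a * a')) ∈ B := by
      rw [← QuotientGroup.eq]
      have : ((a' * a : A) : A ⧸ B) = ((a' : A) : A ⧸ B) * ((a : A) : A ⧸ B) := rfl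
      rw [this]
      have h6 : ((a * a' : A) : A ⧸ B) = ((a : A) : A ⧸ B) * ((a' : A) : A ⧸ B) := rfl
      rw [h6]
      exact hab _ _
    have h7 : a * a' = (a' * a) * ((a' * a)⁻¹ * (a * a')) := by group
    rw [h7, ← hmul, hBfix _ hc (x : V' →ₗ[ℂ] V) x.2]
  haveI : Nontrivial ↥U := ⟨⟨⟨Q, hQU⟩, 0, fun h => hQ0 (congrArg Subtype.val h)⟩⟩
  obtain ⟨v, hv0, hev⟩ := exists_common_eigenvector f hcomm
  choose μ hμ using hev
  set T : V' →ₗ[ℂ] V := (v : V' →ₗ[ℂ] V) with hTdef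
  have hT0 : T ≠ 0 := fun h => hv0 (Subtype.ext h)
  have hTU : T ∈ U := v.2
  have hT' : ∀ (b : B) (w : V'), T (π' (↑b) w) = π (↑b) (T w) := hTU
  have hconj : ∀ a, cmap a T = μ a • T := by
    intro a
    have := congrArg Subtype.val (hμ a)
    exact this
  have helem : ∀ a w, π a (T (π' a⁻¹ w)) = μ a • T w := by
    intro a w
    have := LinearMap.congr_fun (hconj a) w
    rw [cmap_apply] at this
    simpa using this
  have hpi_inj : ∀ (a : A) (x : V), π a x = 0 → x = 0 := by
    intro a x hx
    have := congrArg (π a⁻¹) hx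
    rwa [← Module.End.mul_apply, ← map_mul, inv_mul_cancel, map_one,
      Module.End.one_apply, map_zero] at this
  have hpi'_cancel : ∀ (a : A) (u : V'), π' a⁻¹ (π' a u) = u := by
    intro a u
    rw [← Module.End.mul_apply, ← map_mul]
    simp
  have helem' : ∀ a w, π a (T w) = μ a • T (π' a w) := by
    intro a w
    have := helem a (π' a w)
    rwa [hpi'_cancel a w] at this
  have hμne : ∀ a, μ a ≠ 0 := by
    intro a ha
    apply hT0
    apply LinearMap.ext; intro u
    have h8 := helem' a u
    rw [ha, zero_smul] at h8
    exact hpi_inj a (T u) h8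
  have hsc : ∀ c d : ℂ, c • T = d • T → c = d := by
    intro c d h
    have h9 : (c - d) • T = 0 := by rw [sub_smul, h, sub_self]
    rcases smul_eq_zero.mp h9 with h' | h'
    · exact sub_eq_zero.mp h'
    · exact absurd h' hT0
  have hμ1 : μ 1 = 1 := by
    apply hsc
    rw [← hconj 1, one_smul]
    apply LinearMap.ext; intro w
    rw [cmap_apply]
    simp
  have hμmul : ∀ a a', μ (a * a') = μ a * μ a' := by
    intro a a'
    apply hsc
    rw [← hconj (a * a'), ← hmul, hconj a', map_smul, hconj a, smul_smul, mul_comm (μ a')]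
  have hμB : ∀ c ∈ B, μ c = 1 := by
    intro c hc
    apply hsc
    rw [← hconj c, hBfix c hc T hTU, one_smul]
  -- build the character
  let μu : A →* ℂˣ :=
    { toFun := fun a => Units.mk0 (μ a) (hμne a)
      map_one' := Units.ext (by simp [hμ1])
      map_mul' := fun a a' => Units.ext (by simp [hμmul a a']) }
  let χbar : (A ⧸ B) →* ℂˣ :=
    QuotientGroup.lift B μu (fun c hc => Units.ext (by simp [μu, hμB c hc]))
  refine ⟨χbar⁻¹, ?_⟩
  -- intertwining property
  have hint : ∀ (a : A) (w : V'), T (π' a w) = charTwist B π χbar⁻¹ a (T w) := by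
    intro a w
    have h10 := helem' a w
    have h11 : T (π' a w) = (μ a)⁻¹ • π a (T w) := by
      rw [h10, smul_smul, inv_mul_cancel₀ (hμne a), one_smul]
    rw [h11]
    show (μ a)⁻¹ • π a (T w) = ((χbar⁻¹ ((a : A) : A ⧸ B) : ℂˣ) : ℂ) • π a (T w)
    congr 1
  -- Schur: T is bijective
  have hker : LinearMap.ker T = ⊥ := by
    have hinv : ∀ (g : A) (w : V'), w ∈ LinearMap.ker T → π' g w ∈ LinearMap.ker T := by
      intro g w hw
      rw [LinearMap.mem_ker] at hw ⊢
      rw [hint g w, hw, map_zero]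
    rcases hπ'.2 (LinearMap.ker T) hinv with h | h
    · exact h
    · exact absurd (LinearMap.ker_eq_top.mp h) hT0
  have hrange : LinearMap.range T = ⊤ := by
    have hinv : ∀ (g : A) (w : V), w ∈ LinearMap.range T → π g w ∈ LinearMap.range T := by
      rintro g w ⟨u, rfl⟩
      refine ⟨μ g • π' g u, ?_⟩
      rw [map_smul, hint g u]
      show μ g • (((χbar⁻¹ ((g : A) : A ⧸ B) : ℂˣ) : ℂ) • π g (T u)) = π g (T u)
      have : ((χbar⁻¹ ((g : A) : A ⧸ B) : ℂˣ) : ℂ) = (μ g)⁻¹ := rfl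
      rw [this, smul_smul, mul_inv_cancel₀ (hμne g), one_smul]
    rcases hπ.2 (LinearMap.range T) hinv with h | h
    · exact absurd (LinearMap.range_eq_bot.mp h) hT0
    · exact h
  let e : V' ≃ₗ[ℂ] V :=
    LinearEquiv.ofBijective T ⟨LinearMap.ker_eq_bot.mp hker, LinearMap.range_eq_top.mp hrange⟩
  exact ⟨e, fun g w => hint g w⟩
end
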